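/- Let p be an odd prime, n = rk with r > 1, β ∈ F_{p^n}^*, and f(x) = T^n_k(β·x^{p^i + p^j}) with j = i + kl for some 0 < l < r. If γ ∈ F_{p^n}^* is a b-linear translator of f, then necessarily b = 0. In particular, if β ∈ F_{p^k}^*, then n is even and γ must satisfy γ^{p^{2kl} − 1} = −1 and T^n_k(γ^{1 + p^{lk}}) = 0. -/
import Mathlib


/-- The relative trace map from `F_{p^n}` to the subfield `F_{p^k}`, where `n = r·k`:
`T^n_k(x) = x + x^{p^k} + ⋯ + x^{p^{(r-1)k}}`. -/
def traceMap (p k r : ℕ) {F : Type*} [Field F] (x : F) : F :=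
  ∑ t ∈ Finset.range r, x ^ p ^ (k * t)

/-- `γ` is a `b`-linear translator of `f : F_{p^n} → F_{p^k}` (the subfield `F_{p^k}`
is realized as `{u : F | u ^ p ^ k = u}`). -/
def IsLinearTranslator (p k : ℕ) {F : Type*} [Field F] (f : F → F) (γ b : F) : Prop :=
  ∀ x u : F, u ^ p ^ k = u → f (x + u * γ) - f x = u * b

section aux
variable {p k r : ℕ} {F : Type*} [Field F]

lemma traceMap_zero (hp : 1 < p) (hk : 0 < k) : traceMap p k r (0 : F) = 0 := by
  unfold traceMap
  refine Finset.sum_eq_zero fun t _ => ?_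
  exact zero_pow (by positivity)

lemma traceMap_add [Fact p.Prime] [CharP F p] (a b : F) :
    traceMap p k r (a + b) = traceMap p k r a + traceMap p k r b := by
  unfold traceMap
  rw [← Finset.sum_add_distrib]
  exact Finset.sum_congr rfl fun t _ => add_pow_char_pow a b p (k*t)

lemma traceMap_neg (hp : Odd p) (a : F) : traceMap p k r (-a) = - traceMap p k r a := by
  unfold traceMap
  rw [← Finset.sum_neg_distrib]
  exact Finset.sum_congr rfl fun t _ => (hp.pow).neg_pow a

lemma traceMap_pow_char [Fact p.Prime] [CharP F p] (m : ℕ) (a : F) :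
    traceMap p k r a ^ p ^ m = traceMap p k r (a ^ p ^ m) := by
  unfold traceMap
  rw [sum_pow_char_pow]
  exact Finset.sum_congr rfl fun t _ => by
    rw [← pow_mul, ← pow_mul, mul_comm (p ^ (k*t))]

lemma traceMap_frob (hfix : ∀ x : F, x ^ p ^ (k * r) = x) (a : F) :
    traceMap p k r (a ^ p ^ k) = traceMap p k r a := by
  unfold traceMap
  have h : ∀ t, (a ^ p ^ k) ^ p ^ (k * t) = a ^ p ^ (k * (t + 1)) := fun t => by
    rw [← pow_mul, ← pow_add, mul_add, mul_one, add_comm]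
  rw [Finset.sum_congr rfl fun t _ => h t]
  have := Finset.sum_range_succ' (fun t => a ^ p ^ (k * t)) r
  have h2 := Finset.sum_range_succ (fun t => a ^ p ^ (k * t)) r
  rw [h2] at this
  have h0 : a ^ p ^ (k * r) = a ^ p ^ (k * 0) := by rw [hfix a, mul_zero, pow_zero, pow_one]
  rw [h0] at this
  exact add_right_cancel this.symm

lemma traceMap_frob_pow (hfix : ∀ x : F, x ^ p ^ (k * r) = x) (m : ℕ) (a : F) :
    traceMap p k r (a ^ p ^ (k * m)) = traceMap p k r a := by
  induction m with
  | zero => simp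
  | succ m ih =>
    have : a ^ p ^ (k * (m + 1)) = (a ^ p ^ (k * m)) ^ p ^ k := by
      rw [← pow_mul, ← pow_add, mul_add, mul_one]
    rw [this, traceMap_frob hfix, ih]

lemma traceMap_eq_zero_arg [Fact p.Prime] [Fintype F] (hk : 0 < k) (hr : 0 < r) {C : F}
    (hdeg : p ^ (k * (r - 1)) < Fintype.card F)
    (h : ∀ x : F, traceMap p k r (C * x) = 0) : C = 0 := by
  classical
  have hp1 : 1 < p := Fact.out (p := p.Prime) |>.one_lt
  set P : Polynomial F :=
    ∑ t ∈ Finset.range r, Polynomial.C (C ^ p ^ (k*t)) * Polynomial.X ^ (p ^ (k*t)) with hP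
  have heval : ∀ x : F, P.eval x = 0 := fun x => by
    have := h x
    unfold traceMap at this
    rw [hP, Polynomial.eval_finset_sum]
    rw [← this]
    refine Finset.sum_congr rfl fun t _ => ?_
    simp [mul_pow]
  have hdegP : P.natDegree < Fintype.card F := by
    refine lt_of_le_of_lt ?_ hdeg
    rw [hP]
    refine Polynomial.natDegree_sum_le_of_forall_le _ _ fun t ht => ?_
    refine le_trans (Polynomial.natDegree_C_mul_le _ _) ?_
    rw [Polynomial.natDegree_X_pow]
    exact Nat.pow_le_pow_right (by omega) (Nat.mul_le_mul_left k (by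
      have := Finset.mem_range.mp ht; omega))
  have hP0 : P = 0 :=
    Polynomial.eq_zero_of_natDegree_lt_card_of_eval_eq_zero P Function.injective_id
      (fun x => heval x) hdegP
  have hcoeff := congrArg (fun Q => Polynomial.coeff Q (p ^ (k * (r - 1)))) hP0
  simp only [hP, Polynomial.finset_sum_coeff, Polynomial.coeff_C_mul,
    Polynomial.coeff_X_pow, Polynomial.coeff_zero] at hcoeff
  rw [Finset.sum_eq_single (r - 1) (fun t ht hne => ?_)
    (fun habs => absurd (Finset.mem_range.mpr (by omega)) habs)] at hcoeff
  · rw [if_pos rfl, mul_one] at hcoeff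
    exact pow_eq_zero_iff (n := p ^ (k * (r - 1))) (pow_ne_zero _ (by omega : p ≠ 0)) |>.mp hcoeff
  · have hne' : p ^ (k * (r - 1)) ≠ p ^ (k * t) := fun hEq =>
      hne (Nat.eq_of_mul_eq_mul_left hk (Nat.pow_right_injective hp1 hEq)).symm
    rw [if_neg hne', mul_zero]
end aux

/-- **Theorem 3.8 (ii), p odd.** Let `p` be an odd prime, `n = rk` with `r > 1`,
`β ∈ F_{p^n}^*`, and `f(x) = T^n_k(β·x^{p^i+p^j})` with `j = i + kl`, `0 < l < r`.
If `γ ∈ F_{p^n}^*` is a `b`-linear translator of `f`, then necessarily `b = 0`.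
In particular if `β ∈ F_{p^k}^*`, then `n` is even and `γ` satisfies
`γ^{p^{2kl}−1} = −1` and `T^n_k(γ^{1+p^{lk}}) = 0`. -/
theorem stmt_9 {p k r n l i j : ℕ} (hp : p.Prime) (hp2 : p ≠ 2) (hk : 0 < k)
    (hr : 1 < r) (hn : n = r * k) (hl : 0 < l) (hlr : l < r) (hj : j = i + k * l)
    {F : Type*} [Field F] [Fintype F] (hcard : Fintype.card F = p ^ n)
    (β : F) (hβ : β ≠ 0) (γ b : F) (hγ : γ ≠ 0) (hb : b ^ p ^ k = b)
    (htr : IsLinearTranslator p k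
      (fun x : F => traceMap p k r (β * x ^ (p ^ i + p ^ j))) γ b) :
    b = 0 ∧
      (β ^ p ^ k = β →
        Even n ∧ γ ^ (p ^ (2 * k * l) - 1) = -1 ∧
          traceMap p k r (γ ^ (1 + p ^ (l * k))) = 0) := by
  haveI : Fact p.Prime := ⟨hp⟩
  have hp1 : 1 < p := hp.one_lt
  -- characteristic p
  haveI : CharP F (ringChar F) := ringChar.charP F
  have hqp : (ringChar F).Prime := CharP.char_is_prime F _
  obtain ⟨m, -, hcF⟩ := FiniteField.card F (ringChar F)
  have hqdvd : ringChar F ∣ p ^ n := by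
    rw [← hcard, hcF]; exact dvd_pow_self _ (by exact_mod_cast m.pos.ne')
  have hq : ringChar F = p :=
    (Nat.prime_dvd_prime_iff_eq hqp hp).mp (hqp.dvd_of_dvd_pow hqdvd)
  haveI hcharp : CharP F p := hq ▸ ringChar.charP F
  have two_ne : (2 : F) ≠ 0 := Ring.two_ne_zero (hq ▸ hp2)
  have hpodd : Odd p := hp.odd_of_ne_two hp2
  have hfixn : ∀ x : F, x ^ p ^ n = x := fun x => by
    rw [← hcard]; exact FiniteField.pow_card x
  have hfix : ∀ x : F, x ^ p ^ (k * r) = x := fun x => by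
    rw [mul_comm k r, ← hn]; exact hfixn x
  -- Part 1 : b = 0
  have heven : Even (p ^ i + p ^ j) := (hpodd.pow).add_odd (hpodd.pow)
  have h1 := htr 0 1 (one_pow _)
  have h2 := htr 0 (-1) (by rw [(hpodd.pow).neg_pow, one_pow])
  simp only [zero_add, one_mul, neg_one_mul] at h1 h2
  rw [heven.neg_pow] at h2
  have hb0 : b = 0 := by
    have hbb : b = -b := h1.symm.trans h2
    have h2b : (2 : F) * b = 0 := by linear_combination hbb
    exact (mul_eq_zero.mp h2b).resolve_left two_ne
  refine ⟨hb0, fun hβk => ?_⟩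
  -- Part 2
  rw [hb0] at htr
  -- translator condition with u = 1
  have htr0 : ∀ x : F, traceMap p k r (β * (x + γ) ^ (p ^ i + p ^ j))
      = traceMap p k r (β * x ^ (p ^ i + p ^ j)) := fun x => by
    have := htr x 1 (one_pow _)
    simp only [one_mul, mul_zero] at this
    exact sub_eq_zero.mp this
  have hexpand : ∀ x : F, β * (x + γ) ^ (p ^ i + p ^ j) =
      β * x ^ (p ^ i + p ^ j) + (β * γ ^ p ^ i * x ^ p ^ j +
        (β * γ ^ p ^ j * x ^ p ^ i + β * γ ^ (p ^ i + p ^ j))) := fun x => by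
    rw [pow_add (x + γ), pow_add x, pow_add γ, add_pow_char_pow x γ p i,
      add_pow_char_pow x γ p j]
    ring
  have hT : ∀ x : F, traceMap p k r (β * γ ^ p ^ i * x ^ p ^ j) +
      (traceMap p k r (β * γ ^ p ^ j * x ^ p ^ i) +
        traceMap p k r (β * γ ^ (p ^ i + p ^ j))) = 0 := fun x => by
    have h := htr0 x
    rw [hexpand x, traceMap_add, traceMap_add, traceMap_add] at h
    linear_combination h
  have hT3 : traceMap p k r (β * γ ^ (p ^ i + p ^ j)) = 0 := by
    have := hT 0
    rw [zero_pow (pow_ne_zero _ (by omega : p ≠ 0)),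
      zero_pow (pow_ne_zero _ (by omega : p ≠ 0)), mul_zero, mul_zero,
      traceMap_zero hp1 hk, zero_add, zero_add] at this
    exact this
  have hT2 : ∀ x : F, traceMap p k r (β * γ ^ p ^ i * x ^ p ^ j) +
      traceMap p k r (β * γ ^ p ^ j * x ^ p ^ i) = 0 := fun x => by
    have := hT x
    rw [hT3, add_zero] at this
    exact this
  -- surjectivity of Frobenius iterate
  have hsurj : ∀ x : F, ∃ y : F, y ^ p ^ i = x := by
    have hinj : Function.Injective (fun y : F => y ^ p ^ i) := by
      intro a c hac
      have h0 : (a - c) ^ p ^ i = 0 := by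
        rw [sub_pow_char_pow]; simpa [sub_eq_zero] using hac
      have := pow_eq_zero_iff (pow_ne_zero i (by omega : p ≠ 0)) |>.mp h0
      exact sub_eq_zero.mp this
    exact fun x => Finite.surjective_of_injective hinj x
  -- Step C : linearized relation
  have hlin : ∀ x : F, traceMap p k r (β * γ ^ p ^ i * x ^ p ^ (k * l)) +
      traceMap p k r (β * γ ^ p ^ j * x) = 0 := fun x => by
    obtain ⟨y, hy⟩ := hsurj x
    have hyj : y ^ p ^ j = x ^ p ^ (k * l) := by
      rw [hj, pow_add, pow_mul, hy]
    have := hT2 y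
    rw [hy, hyj] at this
    exact this
  -- Step D : shift the Frobenius
  have hA' : ∀ x : F, traceMap p k r (β * γ ^ p ^ i * x ^ p ^ (k * l)) =
      traceMap p k r ((β * γ ^ p ^ i) ^ p ^ (k * (r - l)) * x) := fun x => by
    rw [← traceMap_frob_pow hfix (r - l) (β * γ ^ p ^ i * x ^ p ^ (k * l))]
    congr 1
    rw [mul_pow, ← pow_mul, ← pow_add]
    have e : k * l + k * (r - l) = k * r := by
      rw [← Nat.mul_add, Nat.add_sub_cancel' hlr.le]
    rw [e, hfix x]
  -- Step E : nondegeneracy of the trace form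
  have hdeg : p ^ (k * (r - 1)) < Fintype.card F := by
    rw [hcard, hn, mul_comm r k]
    exact Nat.pow_lt_pow_right hp1 (mul_lt_mul_of_pos_left (by omega : r - 1 < r) hk)
  have hC0 : (β * γ ^ p ^ i) ^ p ^ (k * (r - l)) + β * γ ^ p ^ j = 0 := by
    refine traceMap_eq_zero_arg hk (by omega : 0 < r) hdeg fun x => ?_
    rw [add_mul, traceMap_add, ← hA' x]
    exact hlin x
  -- Step F : the key relation γ^{p^{2kl}} = -γ
  have hβfrob : ∀ m : ℕ, β ^ p ^ (k * m) = β := by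
    intro m; induction m with
    | zero => simp
    | succ m ih => rw [mul_add, mul_one, pow_add, pow_mul, ih, hβk]
  have h5 : γ ^ p ^ (i + k * (r - l)) + γ ^ p ^ (i + k * l) = 0 := by
    have hrw : (β * γ ^ p ^ i) ^ p ^ (k * (r - l)) = β * γ ^ p ^ (i + k * (r - l)) := by
      rw [mul_pow, hβfrob, ← pow_mul, ← pow_add]
    rw [hrw, hj, ← mul_add] at hC0
    exact (mul_eq_zero.mp hC0).resolve_left hβ
  have hkey : γ ^ p ^ (2 * k * l) = -γ := by
    have h5' := congrArg (fun z : F => z ^ p ^ (k * l)) h5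
    rw [add_pow_char_pow, ← pow_mul, ← pow_mul, ← pow_add, ← pow_add,
      zero_pow (pow_ne_zero _ (by omega : p ≠ 0))] at h5'
    have e1 : i + k * (r - l) + k * l = i + k * r := by
      rw [Nat.add_assoc, ← Nat.mul_add, Nat.sub_add_cancel hlr.le]
    have e2 : i + k * l + k * l = 2 * k * l + i := by ring
    rw [e1, e2] at h5'
    have e3 : γ ^ p ^ (i + k * r) = γ ^ p ^ i := by
      rw [add_comm i, pow_add, pow_mul, hfix]
    rw [e3] at h5'
    have h6 : (γ + γ ^ p ^ (2 * k * l)) ^ p ^ i = 0 := by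
      rw [add_pow_char_pow γ _ p i, ← pow_mul, ← pow_add]
      exact h5'
    have h7 := pow_eq_zero_iff (pow_ne_zero i (by omega : p ≠ 0)) |>.mp h6
    exact (neg_eq_of_add_eq_zero_right h7).symm
  refine ⟨?_, ?_, ?_⟩
  · -- n is even
    by_contra hodd
    have hoddn : Odd n := Nat.not_even_iff_odd.mp hodd
    have iter1 : ∀ s : ℕ, γ ^ (p ^ n) ^ s = γ := by
      intro s; induction s with
      | zero => simp
      | succ s ih => rw [pow_succ, pow_mul, ih, hfixn]
    have iter2 : ∀ s : ℕ, γ ^ (p ^ (2 * k * l)) ^ s = (-1) ^ s * γ := by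
      intro s; induction s with
      | zero => simp
      | succ s ih =>
        rw [pow_succ, pow_mul, ih, mul_pow, hkey, pow_right_comm,
          Odd.neg_one_pow (hpodd.pow)]
        ring
    have hcontra : γ = (-1 : F) ^ n * γ := by
      have e4 : (p ^ (2 * k * l)) ^ n = (p ^ n) ^ (2 * k * l) := by
        rw [← pow_mul, ← pow_mul, mul_comm]
      calc γ = γ ^ (p ^ n) ^ (2 * k * l) := (iter1 _).symm
        _ = γ ^ (p ^ (2 * k * l)) ^ n := by rw [e4]
        _ = (-1) ^ n * γ := iter2 n
    rw [hoddn.neg_one_pow, neg_one_mul] at hcontra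
    have h2γ : (2 : F) * γ = 0 := by linear_combination hcontra
    exact hγ ((mul_eq_zero.mp h2γ).resolve_left two_ne)
  · -- γ ^ (p^{2kl} - 1) = -1
    have hge : 1 ≤ p ^ (2 * k * l) := Nat.one_le_pow _ _ (by omega)
    have hmul : γ ^ (p ^ (2 * k * l) - 1) * γ = -1 * γ := by
      rw [← pow_succ, Nat.sub_add_cancel hge, hkey, neg_one_mul]
    exact mul_right_cancel₀ hγ hmul
  · -- the trace condition
    set z := γ ^ (1 + p ^ (l * k)) with hz
    have hzfrob : z ^ p ^ (k * l) = -z := by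
      rw [hz, ← pow_mul]
      have e5 : (1 + p ^ (l * k)) * p ^ (k * l) = p ^ (k * l) + p ^ (2 * k * l) := by
        rw [add_mul, one_mul, ← pow_add]
        congr 2
        ring
      rw [e5, pow_add, hkey, mul_comm l k, pow_add, pow_one]
      ring
    have hS1 : traceMap p k r z ^ p ^ (k * l) = traceMap p k r z := by
      rw [traceMap_pow_char, traceMap_frob_pow hfix]
    have hS2 : traceMap p k r z ^ p ^ (k * l) = - traceMap p k r z := by
      rw [traceMap_pow_char, hzfrob, traceMap_neg hpodd]
    have h2S : (2 : F) * traceMap p k r z = 0 := by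
      linear_combination hS1.symm.trans hS2
    exact (mul_eq_zero.mp h2S).resolve_left two_ne
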